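/- Any unoriented assembly point on two scaffolds lying in the same connected component of OG(A) is consistently orientable: if Ā is a non-conflicting realization of A and scaffolds s_i, s_j lie in the same connected component (a path or cycle) of OG(Ā), then the unoriented point (s_i, s_j) has a realization consistent with Ā. Moreover, if that component is a cycle, every semi-oriented point on s_i, s_j also has a consistent realization. -/

import Mathlib

/-- An assembly point: two scaffolds with partial orientation data
(`none` = unoriented, `some b` = oriented, `true` = forward). -/
structure APoint (S : Type) where
  s1 : S
  s2 : S
  o1 : Option Bool
  o2 : Option Bool
deriving DecidableEq

/-- A global orientation `σ` extends (is consistent with) the partial data of `p`. -/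
def APoint.extends' {S : Type} (σ : S → Bool) (p : APoint S) : Prop :=
  (∀ b, p.o1 = some b → σ p.s1 = b) ∧ (∀ b, p.o2 = some b → σ p.s2 = b)

/-- The extremity of its left scaffold used by a point realized via `σ`
(head `(s, true)` if `s` is forward). -/
def APoint.usedL {S : Type} (σ : S → Bool) (p : APoint S) : S × Bool := (p.s1, σ p.s1)

/-- The extremity of its right scaffold used by a point realized via `σ`
(tail `(s, false)` if `s` is forward). -/
def APoint.usedR {S : Type} (σ : S → Bool) (p : APoint S) : S × Bool := (p.s2, !σ p.s2)

/-- Two realized points use disjoint sets of extremities (are non-conflicting). -/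
def APoint.disj {S : Type} (τ τ' : S → Bool) (p q : APoint S) : Prop :=
  p.usedL τ ≠ q.usedL τ' ∧ p.usedL τ ≠ q.usedR τ' ∧
  p.usedR τ ≠ q.usedL τ' ∧ p.usedR τ ≠ q.usedR τ'

/-- `σ` is a non-conflicting realization of the assembly `A`: it extends the partial
orientation data of every point, and every scaffold extremity is used at most once. -/
def NCR {S : Type} (A : Finset (APoint S)) (σ : S → Bool) : Prop :=
  (∀ p ∈ A, p.extends' σ) ∧
  (∀ p ∈ A, p.usedL σ ≠ p.usedR σ) ∧
  (∀ p ∈ A, ∀ q ∈ A, p ≠ q → APoint.disj σ σ p q)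

/-- The scaffolds occurring in an assembly. -/
def scafs {S : Type} [DecidableEq S] (A : Finset (APoint S)) : Finset S :=
  A.biUnion (fun p => {p.s1, p.s2})

/-- Adjacency edges of the scaffold assembly graph `SAG` of the realization of `A`
by `σ`: the undirected edges joining the used extremities of each point. -/
def adjE {S : Type} (A : Finset (APoint S)) (σ : S → Bool) (x y : S × Bool) : Prop :=
  ∃ p ∈ A, (p.usedL σ = x ∧ p.usedR σ = y) ∨ (p.usedL σ = y ∧ p.usedR σ = x)

/-- One step of an alternating walk in `SAG`: follow an adjacency edge from extremity
`x` to an extremity `y`, then traverse the scaffold edge of `y.1` to its other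
extremity. -/
def stepR {S : Type} (A : Finset (APoint S)) (σ : S → Bool) (x z : S × Bool) : Prop :=
  ∃ y : S × Bool, adjE A σ x y ∧ z = (y.1, !y.2)

/-- An assembly point `q` has a consistent orientation with the realization of `A` by
`σ`: some realization `(b1, b2)` of `q` is connected by an alternating walk in `SAG`
leaving `q.s1` through the extremity dictated by `b1` and entering `q.s2` through the
extremity dictated by `b2` (matching end-edge directions). -/
def consistentPt {S : Type} (A : Finset (APoint S)) (σ : S → Bool) (q : APoint S) :
    Prop :=
  ∃ b1 b2 : Bool, (∀ c, q.o1 = some c → b1 = c) ∧ (∀ c, q.o2 = some c → b2 = c) ∧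
    ∃ x : S × Bool,
      Relation.ReflTransGen (stepR A σ) (q.s1, b1) x ∧ adjE A σ x (q.s2, !b2)

open Classical in
/-- The score of a realization: the number of points of `O` consistently oriented. -/
noncomputable def score {S : Type} (A O : Finset (APoint S)) (σ : S → Bool) : ℕ :=
  (O.filter (fun q => consistentPt A σ q)).card

/-- Adjacency in the order graph of an assembly with partial orientation data. -/
def ogAdjP {S : Type} (A : Finset (APoint S)) (s t : S) : Prop :=
  ∃ p ∈ A, (p.s1 = s ∧ p.s2 = t) ∨ (p.s1 = t ∧ p.s2 = s)

/-!
In a non-conflicting realization every extremity carries at most one adjacency edge, so the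
alternating step `stepR` is a partial injection, and a point on `s₁, s₂` is consistent exactly
when some walk of `stepR` leads from an extremity of `s₁` to one of `s₂`.

Following an `OG` path from `u` to `v`, such a walk is extended edge by edge; the only
obstruction, reaching `t` at the extremity of the next edge `t — t'`, means the walk came
through that edge and has already reached `t'`. On a cycle component every extremity is used,
so `stepR` permutes the finitely many reachable extremities and every walk returns. Reversing
the return walk from `(v, c)` to `(u, b)` gives a walk from `(u, !b)` to `(v, !c)`, and the two
walks together realize every semi-oriented point.
-/

namespace Relation

theorem ReflTransGen.reverse_of_injective_of_finite {α : Type*} {r : α → α → Prop} {x y : α}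
    (hfun : ∀ {a b c}, r a b → r a c → b = c) (hinj : ∀ {a b c}, r a c → r b c → a = b)
    (htot : ∀ y, ReflTransGen r x y → ∃ z, r y z) (hfin : {y | ReflTransGen r x y}.Finite)
    (hxy : ReflTransGen r x y) : ReflTransGen r y x := by
  let R := {y | ReflTransGen r x y}
  have : Finite R := hfin.to_subtype
  choose g hg using fun y : R => htot y y.2
  let f : R → R := fun y => ⟨g y, y.2.tail (hg y)⟩
  have hf_inj : Function.Injective f := fun a b hab => by
    have hgab : g a = g b := congrArg Subtype.val hab
    exact Subtype.ext (hinj (hg a) (hgab ▸ hg b))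
  have hf_walk : ∀ n (a : R), ReflTransGen r a (f^[n] a) := by
    intro n
    induction n with
    | zero => exact fun _ => .refl
    | succ n ih => exact fun a => (ih a).tail (Function.iterate_succ_apply' f n a ▸ hg _)
  have hf_orbit : ∀ y (hy : ReflTransGen r x y), ∃ n, f^[n] ⟨x, .refl⟩ = ⟨y, hy⟩ := by
    intro y hy
    induction hy with
    | refl => exact ⟨0, rfl⟩
    | tail hxy hyz ih =>
      obtain ⟨n, hn⟩ := ih
      refine ⟨n + 1, Subtype.ext ?_⟩
      rw [Function.iterate_succ_apply', hn]
      exact hfun (hg _) hyz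
  obtain ⟨p, hp, hper⟩ := hf_inj.mem_periodicPts ⟨x, .refl⟩
  obtain ⟨m, hm⟩ := hf_orbit y hxy
  have hback : f^[p * m - m] ⟨y, hxy⟩ = ⟨x, .refl⟩ := by
    rw [← hm, ← Function.iterate_add_apply, Nat.sub_add_cancel (Nat.le_mul_of_pos_left m hp)]
    exact (hper.mul_const m).eq
  simpa [hback] using hf_walk (p * m - m) ⟨y, hxy⟩

end Relation

open Relation

section Walks

variable {S : Type} {A : Finset (APoint S)} {σ : S → Bool}

theorem adjE_symm {x y : S × Bool} (h : adjE A σ x y) : adjE A σ y x := by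
  obtain ⟨p, hp, h⟩ := h
  exact ⟨p, hp, h.symm⟩

theorem APoint.eq_of_uses_of_NCR (h : NCR A σ) {p q : APoint S} {e : S × Bool} (hp : p ∈ A)
    (hq : q ∈ A) (hpe : p.usedL σ = e ∨ p.usedR σ = e) (hqe : q.usedL σ = e ∨ q.usedR σ = e) :
    p = q := by
  by_contra hne
  obtain ⟨d1, d2, d3, d4⟩ := h.2.2 p hp q hq hne
  rcases hpe with rfl | rfl <;> rcases hqe with h' | h' <;> simp_all

theorem adjE_unique (h : NCR A σ) {x y y' : S × Bool} (hy : adjE A σ x y)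
    (hy' : adjE A σ x y') : y = y' := by
  obtain ⟨p, hp, hxy⟩ := hy
  obtain ⟨q, hq, hxy'⟩ := hy'
  obtain rfl : p = q := APoint.eq_of_uses_of_NCR h hp hq (e := x)
    (hxy.imp (·.1) (·.2)) (hxy'.imp (·.1) (·.2))
  have := h.2.1 p hp
  rcases hxy with ⟨rfl, rfl⟩ | ⟨rfl, rfl⟩ <;> rcases hxy' with ⟨h1, h2⟩ | ⟨h1, h2⟩ <;> simp_all

theorem stepR_iff {x z : S × Bool} : stepR A σ x z ↔ adjE A σ x (z.1, !z.2) := by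
  refine ⟨?_, fun h => ⟨_, h, by simp⟩⟩
  rintro ⟨y, hy, rfl⟩
  simpa using hy

theorem stepR_functional (h : NCR A σ) {x z z' : S × Bool} (hz : stepR A σ x z)
    (hz' : stepR A σ x z') : z = z' := by
  obtain ⟨y, hy, rfl⟩ := hz
  obtain ⟨y', hy', rfl⟩ := hz'
  rw [adjE_unique h hy hy']

theorem stepR_injective (h : NCR A σ) {x x' z : S × Bool} (hx : stepR A σ x z)
    (hx' : stepR A σ x' z) : x = x' :=
  adjE_unique h (adjE_symm (stepR_iff.1 hx)) (adjE_symm (stepR_iff.1 hx'))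

theorem stepR_reverse {x z : S × Bool} (h : stepR A σ x z) :
    stepR A σ (z.1, !z.2) (x.1, !x.2) :=
  stepR_iff.2 (by simpa using adjE_symm (stepR_iff.1 h))

theorem transGen_stepR_reverse {x z : S × Bool} (h : TransGen (stepR A σ) x z) :
    TransGen (stepR A σ) (z.1, !z.2) (x.1, !x.2) :=
  transGen_swap.1 (TransGen.lift (fun x : S × Bool => (x.1, !x.2))
    (fun _ _ => stepR_reverse) _ _ h)

theorem ogAdjP_of_stepR {x z : S × Bool} (h : stepR A σ x z) : ogAdjP A x.1 z.1 := by
  obtain ⟨y, ⟨p, hp, hxy⟩, rfl⟩ := h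
  refine ⟨p, hp, hxy.imp ?_ ?_⟩ <;> rintro ⟨rfl, rfl⟩ <;> exact ⟨rfl, rfl⟩

theorem ogAdjP.exists_stepR {t t' : S} (h : ogAdjP A t t') :
    ∃ d d', stepR A σ (t, d) (t', d') := by
  obtain ⟨p, hp, ⟨rfl, rfl⟩ | ⟨rfl, rfl⟩⟩ := h
  · exact ⟨σ p.s1, σ p.s2, stepR_iff.2 ⟨p, hp, Or.inl ⟨rfl, rfl⟩⟩⟩
  · exact ⟨!σ p.s2, !σ p.s1, stepR_iff.2 ⟨p, hp, Or.inr ⟨by simp [APoint.usedL], rfl⟩⟩⟩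

theorem fst_mem_scafs_of_stepR [DecidableEq S] {x z : S × Bool} (h : stepR A σ x z) :
    z.1 ∈ scafs A := by
  obtain ⟨p, hp, hxz⟩ := ogAdjP_of_stepR h
  refine Finset.mem_biUnion.2 ⟨p, hp, ?_⟩
  rcases hxz with ⟨-, h⟩ | ⟨h, -⟩ <;> simp [h]

/-- Two distinct points on `w` cannot share an extremity of `w`, so together they use both. -/
theorem exists_stepR_of_card_eq_two [DecidableEq S] (h : NCR A σ) {w : S} (d : Bool)
    (hw : (A.filter (fun p => p.s1 = w ∨ p.s2 = w)).card = 2) : ∃ z, stepR A σ (w, d) z := by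
  have huse : ∀ p ∈ A, (p.usedL σ = (w, d) ∨ p.usedR σ = (w, d)) → ∃ z, stepR A σ (w, d) z := by
    rintro p hp (hL | hR)
    · exact ⟨((p.usedR σ).1, !(p.usedR σ).2), stepR_iff.2 ⟨p, hp, Or.inl ⟨hL, by simp⟩⟩⟩
    · exact ⟨((p.usedL σ).1, !(p.usedL σ).2), stepR_iff.2 ⟨p, hp, Or.inr ⟨by simp, hR⟩⟩⟩
  obtain ⟨p, q, hpq, hpq'⟩ := Finset.card_eq_two.1 hw
  have hp := Finset.mem_filter.1 (show p ∈ A.filter (fun p => p.s1 = w ∨ p.s2 = w) by simp [hpq'])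
  have hq := Finset.mem_filter.1 (show q ∈ A.filter (fun p => p.s1 = w ∨ p.s2 = w) by simp [hpq'])
  have hend : ∀ r : APoint S, (r.s1 = w ∨ r.s2 = w) →
      ∃ e, r.usedL σ = (w, e) ∨ r.usedR σ = (w, e) := by
    rintro r (rfl | rfl)
    exacts [⟨_, Or.inl rfl⟩, ⟨_, Or.inr rfl⟩]
  obtain ⟨ep, hep⟩ := hend p hp.2
  obtain ⟨eq, heq⟩ := hend q hq.2
  by_cases hpd : ep = d
  · exact huse p hp.1 (hpd ▸ hep)
  by_cases hqd : eq = d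
  · exact huse q hq.1 (hqd ▸ heq)
  obtain rfl : ep = eq := by cases ep <;> cases eq <;> cases d <;> simp_all
  exact (hpq (APoint.eq_of_uses_of_NCR h hp.1 hq.1 hep heq)).elim

theorem consistentPt_iff_transGen {q : APoint S} :
    consistentPt A σ q ↔ ∃ b1 b2, (∀ c, q.o1 = some c → b1 = c) ∧
      (∀ c, q.o2 = some c → b2 = c) ∧ TransGen (stepR A σ) (q.s1, b1) (q.s2, b2) := by
  simp only [consistentPt, TransGen.tail'_iff, stepR_iff]

theorem eq_or_exists_transGen_stepR_of_reflTransGen_ogAdjP (h : NCR A σ) {u t : S}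
    (hut : ReflTransGen (ogAdjP A) u t) : t = u ∨ ∃ b c, TransGen (stepR A σ) (u, b) (t, c) := by
  induction hut with
  | refl => exact Or.inl rfl
  | @tail t t' _ htt' ih =>
    obtain ⟨d, d', hstep⟩ := htt'.exists_stepR (σ := σ)
    rcases ih with rfl | ⟨b, c, hwalk⟩
    · exact Or.inr ⟨d, d', .single hstep⟩
    by_cases hdc : d = c
    · exact Or.inr ⟨b, d', hwalk.tail (hdc ▸ hstep)⟩
    -- otherwise the walk entered `t` through the edge `t — t'` itself, so it passed by `t'`
    obtain ⟨x, hux, hxt⟩ := TransGen.tail'_iff.1 hwalk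
    obtain rfl : x = (t', !d') :=
      stepR_injective h hxt (by simpa [Bool.not_eq.2 hdc] using stepR_reverse hstep)
    rcases reflTransGen_iff_eq_or_transGen.1 hux with heq | hw
    · exact Or.inl (congrArg Prod.fst heq)
    · exact Or.inr ⟨b, !d', hw⟩

theorem transGen_stepR_not_of_cycle [DecidableEq S] (h : NCR A σ) {u v : S} (huv : u ≠ v)
    (hcyc : ∀ w, ReflTransGen (ogAdjP A) u w →
      (A.filter (fun p => p.s1 = w ∨ p.s2 = w)).card = 2)
    {b c : Bool} (hw : TransGen (stepR A σ) (u, b) (v, c)) :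
    TransGen (stepR A σ) (u, !b) (v, !c) := by
  have hreach : ∀ y, ReflTransGen (stepR A σ) (u, b) y → ReflTransGen (ogAdjP A) u y.1 :=
    fun y hy => ReflTransGen.lift Prod.fst (fun _ _ => ogAdjP_of_stepR) _ _ hy
  have hfin : {y | ReflTransGen (stepR A σ) (u, b) y}.Finite := by
    refine ((scafs A ×ˢ Finset.univ : Finset (S × Bool)).finite_toSet.insert (u, b)).subset ?_
    intro y hy
    rcases reflTransGen_iff_eq_or_transGen.1 hy with rfl | hy
    · exact Set.mem_insert _ _
    · obtain ⟨x, -, hxy⟩ := TransGen.tail'_iff.1 hy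
      exact Set.mem_insert_of_mem _ (by simpa using fst_mem_scafs_of_stepR hxy)
  have hback : ReflTransGen (stepR A σ) (v, c) (u, b) :=
    ReflTransGen.reverse_of_injective_of_finite (stepR_functional h) (stepR_injective h)
      (fun y hy => exists_stepR_of_card_eq_two h y.2 (hcyc _ (hreach y hy))) hfin
      hw.to_reflTransGen
  rcases reflTransGen_iff_eq_or_transGen.1 hback with heq | hback
  · exact absurd (congrArg Prod.fst heq) huv
  · simpa using transGen_stepR_reverse hback

end Walks

theorem exists_compatible_of_not_not {o1 o2 : Option Bool} (ho : o1 = none ∨ o2 = none)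
    {P : Bool → Bool → Prop} {b c : Bool} (hbc : P b c) (hbc' : P (!b) (!c)) :
    ∃ b1 b2, (∀ x, o1 = some x → b1 = x) ∧ (∀ x, o2 = some x → b2 = x) ∧ P b1 b2 := by
  have hleft : ∀ b1, ∃ c1, P b1 c1 := fun b1 => by
    rcases Bool.eq_or_eq_not b1 b with rfl | rfl
    exacts [⟨c, hbc⟩, ⟨!c, hbc'⟩]
  have hright : ∀ c1, ∃ b1, P b1 c1 := fun c1 => by
    rcases Bool.eq_or_eq_not c1 c with rfl | rfl
    exacts [⟨b, hbc⟩, ⟨!b, hbc'⟩]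
  rcases ho with rfl | rfl
  · obtain ⟨b1, hb1⟩ := hright (o2.getD c)
    exact ⟨b1, o2.getD c, by simp, by rintro x rfl; rfl, hb1⟩
  · obtain ⟨c1, hc1⟩ := hleft (o1.getD b)
    exact ⟨o1.getD b, c1, by rintro x rfl; rfl, by simp, hc1⟩

theorem same_component_consistently_orientable_general {S : Type} [DecidableEq S]
    (A : Finset (APoint S)) (σ : S → Bool) (h : NCR A σ)
    (u v : S) (huv : u ≠ v)
    (hconn : Relation.ReflTransGen (ogAdjP A) u v) :
    consistentPt A σ ⟨u, v, none, none⟩ ∧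
    ((∀ w : S, Relation.ReflTransGen (ogAdjP A) u w →
        (A.filter (fun p => p.s1 = w ∨ p.s2 = w)).card = 2) →
      ∀ q : APoint S, q.s1 = u → q.s2 = v → (q.o1 = none ∨ q.o2 = none) →
        consistentPt A σ q) := by
  obtain ⟨b, c, hbc⟩ : ∃ b c, TransGen (stepR A σ) (u, b) (v, c) :=
    (eq_or_exists_transGen_stepR_of_reflTransGen_ogAdjP h hconn).resolve_left huv.symm
  refine ⟨consistentPt_iff_transGen.2 ⟨b, c, by simp, by simp, hbc⟩, ?_⟩
  rintro hcyc q rfl rfl hq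
  exact consistentPt_iff_transGen.2
    (exists_compatible_of_not_not hq hbc (transGen_stepR_not_of_cycle h huv hcyc hbc))

/-- if `σ` is a non-conflicting realization of `A` and scaffolds `u, v`
lie in the same connected component of `OG(A)`, then the unoriented point `(u, v)` has
a realization consistent with the realized assembly; moreover if that component is a
cycle (every scaffold in it participates in exactly two points), every semi-oriented
point on `u, v` also has a consistent realization. -/
theorem same_component_consistently_orientable {S : Type} [DecidableEq S]
    (A : Finset (APoint S)) (σ : S → Bool) (h : NCR A σ)
    (u v : S) (hu : u ∈ scafs A) (hv : v ∈ scafs A) (huv : u ≠ v)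
    (hconn : Relation.ReflTransGen (ogAdjP A) u v) :
    consistentPt A σ ⟨u, v, none, none⟩ ∧
    ((∀ w : S, Relation.ReflTransGen (ogAdjP A) u w →
        (A.filter (fun p => p.s1 = w ∨ p.s2 = w)).card = 2) →
      ∀ q : APoint S, q.s1 = u → q.s2 = v → (q.o1 = none ∨ q.o2 = none) →
        consistentPt A σ q) :=
  same_component_consistently_orientable_general A σ h u v huv hconn
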